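/- For every real α > -1 and every integer n ≥ 3, the best Markov constant satisfies c_n(α)² ≥ n²/((α+1)(α+3)) + (2α²+5α+6)n/(3(α+1)(α+2)(α+3)) + (α+6)/(3(α+2)(α+3)). -/

import Mathlib

/-!
Write `L_k` for the Laguerre polynomials of parameter `α`. They are orthogonal for `w_α`, with
`‖L_k‖² = Γ(α+1) h_k` where `h_k = (α+1)_k / k!`, and `L_k' = -∑_{j<k} L_j`. Put
`s_m = ∑_{m<k≤n} 1/h_k`. The test polynomials `P_i = ∑_{i<k≤n} L_k / h_k` (`i < n`) then satisfy
`‖P_i‖² = Γ(α+1) s_i` and `‖P_i'‖² = Γ(α+1) ∑_{j<n} h_j s_{max(i,j)}²`. The largest of these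
Rayleigh quotients is at least their mediant with weights `h_i`, namely
`∑_{i,j<n} h_i h_j s_{max(i,j)}² / ∑_{i<n} h_i s_i`, and closed-form summation by induction on `n`
evaluates this ratio to the stated bound. The supremum defining `c_n(α)` is finite by the same
expansion and Cauchy–Schwarz, which give `c_n(α)² ≤ ∑_{i<n} h_i s_i = n(n+1)/(2(α+1))`.
-/

open MeasureTheory

/-- The weighted `L²` norm with the Laguerre weight `w_α(x) = x^α e^{-x}` on `(0,∞)`. -/
noncomputable def laguerreNorm (α : ℝ) (f : ℝ → ℝ) : ℝ :=
  Real.sqrt (∫ x in Set.Ioi (0 : ℝ), (f x) ^ 2 * (x ^ α * Real.exp (-x)))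

/-- The best Markov constant `c_n(α)` in the inequality
`‖p'‖_{w_α} ≤ c_n(α) ‖p‖_{w_α}` over polynomials of degree at most `n`. -/
noncomputable def markovConst (n : ℕ) (α : ℝ) : ℝ :=
  sSup {r : ℝ | ∃ p : Polynomial ℝ, p ≠ 0 ∧ p.natDegree ≤ n ∧
    r = laguerreNorm α (fun x => (Polynomial.derivative p).eval x) /
        laguerreNorm α (fun x => p.eval x)}

open Polynomial Finset Nat

theorem sum_neg_one_pow_mul_choose_mul_eval {R : Type*} [CommRing R] (Q : R[X]) {k : ℕ}
    (hQ : Q.natDegree ≤ k) :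
    ∑ i ∈ range (k + 1), (-1) ^ i * (k.choose i : R) * Q.eval (i : R) =
      (-1) ^ k * k ! * Q.coeff k := by
  have hΔ : (fwdDiff 1)^[k] Q.eval 0 = k ! * Q.coeff k := by
    rcases hQ.lt_or_eq with h | rfl
    · simp [fwdDiff_iter_eq_zero_of_degree_lt h, coeff_eq_zero_of_natDegree_lt h]
    · rw [fwdDiff_iter_degree_eq_factorial]
      simp only [Pi.smul_apply, Pi.natCast_apply, smul_eq_mul, leadingCoeff, mul_comm]
  rw [fwdDiff_iter_eq_sum_shift] at hΔ
  rw [mul_assoc, ← hΔ, mul_sum]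
  refine sum_congr rfl fun i hi => ?_
  have hsign : (-1 : R) ^ k * (-1) ^ (k - i) = (-1) ^ i := by
    have hik := mem_range_succ_iff.1 hi
    rw [← pow_add, show k + (k - i) = i + 2 * (k - i) by omega, pow_add, pow_mul, neg_one_sq,
      one_pow, mul_one]
  simp only [zsmul_eq_mul, zero_add, nsmul_eq_mul, mul_one]
  push_cast
  rw [← hsign]; ring

theorem exists_eq_sum_smul_of_degree_lt {K : Type*} [Field K] {q : ℕ → K[X]}
    (hdeg : ∀ k, (q k).natDegree ≤ k) (hcoeff : ∀ k, (q k).coeff k ≠ 0) {N : ℕ} {p : K[X]}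
    (hp : p.degree < N) : ∃ c : ℕ → K, p = ∑ k ∈ range N, c k • q k := by
  induction N generalizing p with
  | zero => exact ⟨0, by simpa using hp⟩
  | succ N ih =>
    set μ := p.coeff N / (q N).coeff N
    obtain ⟨c, hc⟩ := ih (p := p - μ • q N) <| (degree_lt_iff_coeff_zero _ _).2 fun m hm => by
      rcases (Nat.cast_le.1 hm).eq_or_lt with rfl | hlt
      · simp [μ, hcoeff]
      · rw [coeff_sub, coeff_smul, coeff_eq_zero_of_natDegree_lt ((hdeg N).trans_lt hlt),
          (degree_lt_iff_coeff_zero _ _).1 hp m (by exact_mod_cast hlt)]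
        simp
    refine ⟨Function.update c N μ, ?_⟩
    rw [sum_range_succ, Function.update_self, sum_congr rfl fun k hk =>
      by rw [Function.update_of_ne (mem_range.1 hk).ne], ← hc, sub_add_cancel]

theorem ascPochhammer_eval_mul_eval_add {S : Type*} [CommSemiring S] (x : S) (n m : ℕ) :
    (ascPochhammer S n).eval x * (ascPochhammer S m).eval (x + n) =
      (ascPochhammer S (n + m)).eval x := by
  rw [← ascPochhammer_mul, eval_mul, eval_comp]
  simp

theorem Real.Gamma_add_nat_eq_mul {s : ℝ} (hs : 0 < s) (n : ℕ) :
    Real.Gamma (s + n) = (ascPochhammer ℝ n).eval s * Real.Gamma s := by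
  induction n with
  | zero => simp
  | succ n ih =>
    rw [Nat.cast_succ, ← add_assoc, Real.Gamma_add_one (by positivity), ih,
      ascPochhammer_succ_eval]
    ring

theorem exists_mul_le_of_mul_sum_le {ι : Type*} {s : Finset ι} (hs : s.Nonempty)
    {w a b : ι → ℝ} {B : ℝ} (hw : ∀ i ∈ s, 0 < w i)
    (h : B * ∑ i ∈ s, w i * b i ≤ ∑ i ∈ s, w i * a i) : ∃ i ∈ s, B * b i ≤ a i := by
  by_contra! hlt
  have := sum_lt_sum_of_nonempty hs fun i hi => mul_lt_mul_of_pos_left (hlt i hi) (hw i hi)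
  rw [mul_sum] at h
  simp only [mul_left_comm B] at h
  linarith

theorem sum_sum_mul_max_of_eq_zero {R : Type*} [CommSemiring R] (g G : ℕ → R) {n : ℕ}
    (hG : G n = 0) :
    ∑ i ∈ range (n + 1), ∑ j ∈ range (n + 1), g i * g j * G (max i j) =
      ∑ i ∈ range n, ∑ j ∈ range n, g i * g j * G (max i j) := by
  have hrow : ∀ i ∈ range (n + 1), ∑ j ∈ range (n + 1), g i * g j * G (max i j) =
      ∑ j ∈ range n, g i * g j * G (max i j) := fun i hi => by
    rw [sum_range_succ, max_eq_right (mem_range_succ_iff.1 hi), hG, mul_zero, add_zero]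
  rw [sum_congr rfl hrow, sum_range_succ]
  convert add_zero _
  exact sum_eq_zero fun j hj => by rw [max_eq_left (mem_range.1 hj).le, hG, mul_zero]

/-- `L_k^{(α)}(x) = ∑_{i ≤ k} (-1)^i binom(k+α, k-i) x^i / i!`, with the generalized binomial
coefficient `binom(k+α, k-i) = (α+1+i)_{k-i} / (k-i)!`. -/
noncomputable def laguerre (α : ℝ) (k : ℕ) : ℝ[X] :=
  ∑ i ∈ range (k + 1),
    C ((-1) ^ i * (ascPochhammer ℝ (k - i)).eval (α + 1 + i) / (i ! * (k - i)!)) * X ^ i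

theorem coeff_laguerre (α : ℝ) (k i : ℕ) :
    (laguerre α k).coeff i = if i ≤ k then
      (-1) ^ i * (ascPochhammer ℝ (k - i)).eval (α + 1 + i) / (i ! * (k - i)!) else 0 := by
  simp only [laguerre, finsetSum_coeff, coeff_C_mul_X_pow, sum_ite_eq, mem_range_succ_iff]

theorem coeff_laguerre_of_le (α : ℝ) {k i : ℕ} (h : i ≤ k) :
    (laguerre α k).coeff i =
      (-1) ^ i * (ascPochhammer ℝ (k - i)).eval (α + 1 + i) / (i ! * (k - i)!) := by
  rw [coeff_laguerre, if_pos h]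

theorem coeff_laguerre_of_lt (α : ℝ) {k i : ℕ} (h : k < i) : (laguerre α k).coeff i = 0 := by
  rw [coeff_laguerre, if_neg h.not_ge]

theorem coeff_laguerre_self (α : ℝ) (k : ℕ) : (laguerre α k).coeff k = (-1) ^ k / k ! := by
  simp [coeff_laguerre_of_le]

theorem natDegree_laguerre_le (α : ℝ) (k : ℕ) : (laguerre α k).natDegree ≤ k :=
  natDegree_le_iff_coeff_eq_zero.2 fun _ h => coeff_laguerre_of_lt α (by exact_mod_cast h)

theorem exists_eq_sum_smul_laguerre (α : ℝ) {n : ℕ} {p : ℝ[X]} (hp : p.natDegree ≤ n) :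
    ∃ c : ℕ → ℝ, p = ∑ k ∈ range (n + 1), c k • laguerre α k :=
  exists_eq_sum_smul_of_degree_lt (natDegree_laguerre_le α)
    (fun k => by simp [coeff_laguerre_self, factorial_ne_zero])
    (degree_le_natDegree.trans_lt (by exact_mod_cast Nat.lt_succ_of_le hp))

theorem derivative_laguerre_succ (α : ℝ) (k : ℕ) :
    derivative (laguerre α (k + 1)) = -laguerre (α + 1) k := by
  ext m
  rw [coeff_derivative, coeff_neg]
  rcases le_or_gt m k with h | h
  · rw [coeff_laguerre_of_le α (by omega : m + 1 ≤ k + 1), coeff_laguerre_of_le (α + 1) h,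
      Nat.add_sub_add_right, factorial_succ]
    push_cast
    rw [show α + 1 + (m + 1) = α + 1 + 1 + m by ring]
    field_simp
    ring
  · rw [coeff_laguerre_of_lt α (by omega), coeff_laguerre_of_lt (α + 1) h]
    simp

theorem laguerre_add_one_succ (α : ℝ) (k : ℕ) :
    laguerre (α + 1) (k + 1) = laguerre (α + 1) k + laguerre α (k + 1) := by
  ext m
  rw [coeff_add]
  rcases lt_trichotomy m (k + 1) with h | rfl | h
  · obtain ⟨d, rfl⟩ := Nat.exists_eq_add_of_le (Nat.le_of_lt_succ h)
    rw [coeff_laguerre_of_le _ h.le, coeff_laguerre_of_le _ (by omega),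
      coeff_laguerre_of_le _ h.le, show m + d + 1 - m = d + 1 by omega,
      show m + d - m = d by omega, ascPochhammer_succ_eval, ascPochhammer_succ_left, eval_mul,
      eval_X, eval_comp, factorial_succ]
    simp only [eval_add, eval_X, eval_one]
    push_cast
    rw [show α + 1 + m + 1 = α + 1 + 1 + m by ring]
    field_simp
    ring
  · simp [coeff_laguerre_self, coeff_laguerre_of_lt]
  · simp [coeff_laguerre_of_lt, h, (Nat.lt_succ_self k).trans h]

theorem laguerre_add_one (α : ℝ) (k : ℕ) :
    laguerre (α + 1) k = ∑ j ∈ range (k + 1), laguerre α j := by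
  induction k with
  | zero => simp [laguerre]
  | succ k ih => rw [laguerre_add_one_succ, ih, sum_range_succ _ (k + 1)]

theorem derivative_laguerre (α : ℝ) (k : ℕ) :
    derivative (laguerre α k) = -∑ j ∈ range k, laguerre α j := by
  cases k with
  | zero => simp [laguerre]
  | succ k => rw [derivative_laguerre_succ, laguerre_add_one]

theorem derivative_sum_smul_laguerre (α : ℝ) (n : ℕ) (c : ℕ → ℝ) :
    derivative (∑ k ∈ range (n + 1), c k • laguerre α k) =
      -∑ j ∈ range n, (∑ k ∈ Ico (j + 1) (n + 1), c k) • laguerre α j := by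
  simp only [derivative_sum, derivative_smul, derivative_laguerre, smul_neg, sum_neg_distrib,
    smul_sum, sum_smul]
  congr 1
  exact sum_comm' fun k j => by simp only [mem_range, mem_Ico]; omega

/-- Normalized so that `∫_0^∞ p w_α = Γ(α+1) · laguerreMoment α p`
(`integral_eval_mul_rpow_mul_exp_neg`): the moments of `w_α / Γ(α+1)` are `(α+1)_m`. -/
noncomputable def laguerreMoment (α : ℝ) : ℝ[X] →ₗ[ℝ] ℝ :=
  lsum fun m => (ascPochhammer ℝ m).eval (α + 1) • LinearMap.id

theorem laguerreMoment_C_mul_X_pow (α a : ℝ) (m : ℕ) :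
    laguerreMoment α (C a * X ^ m) = a * (ascPochhammer ℝ m).eval (α + 1) := by
  rw [C_mul_X_pow_eq_monomial, laguerreMoment, lsum_apply, sum_monomial_index] <;>
    simp [mul_comm]

theorem laguerreMoment_laguerre_mul_X_pow (α : ℝ) {k m : ℕ} (hmk : m ≤ k) :
    laguerreMoment α (laguerre α k * X ^ m) =
      if m = k then (-1) ^ k * (ascPochhammer ℝ k).eval (α + 1) else 0 := by
  -- Since `(α+1)_{i+m} = (α+1)_i (α+1+i)_m`, the moment is `(α+1)_k / k!` times the `k`-th finite
  -- difference at `0` of `Q(y) = (y+α+1)_m`, a polynomial of degree `m ≤ k`.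
  set Q := (ascPochhammer ℝ m).comp (X + C (α + 1))
  have hQ : Q.natDegree = m := by
    rw [natDegree_comp, ascPochhammer_natDegree, natDegree_X_add_C, mul_one]
  have hterm : ∀ i ∈ range (k + 1),
      laguerreMoment α (C ((-1) ^ i * (ascPochhammer ℝ (k - i)).eval (α + 1 + i) /
        (i ! * (k - i)!)) * X ^ i * X ^ m) =
      (ascPochhammer ℝ k).eval (α + 1) / k ! *
        ((-1) ^ i * (k.choose i : ℝ) * Q.eval (i : ℝ)) := fun i hi => by
    have hik := mem_range_succ_iff.1 hi
    have hk : (ascPochhammer ℝ k).eval (α + 1) =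
        (ascPochhammer ℝ i).eval (α + 1) * (ascPochhammer ℝ (k - i)).eval (α + 1 + i) := by
      rw [ascPochhammer_eval_mul_eval_add, Nat.add_sub_cancel' hik]
    rw [mul_assoc, ← pow_add, laguerreMoment_C_mul_X_pow, ← ascPochhammer_eval_mul_eval_add,
      eval_comp, hk]
    have := Nat.choose_mul_factorial_mul_factorial hik
    simp only [eval_add, eval_X, eval_C]
    rw [show (i : ℝ) + (α + 1) = α + 1 + i by ring]
    field_simp
    rw [← this]; push_cast; ring
  rw [laguerre, sum_mul, map_sum, sum_congr rfl hterm, ← mul_sum,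
    sum_neg_one_pow_mul_choose_mul_eval Q (hQ.trans_le hmk)]
  rcases hmk.eq_or_lt with rfl | hlt
  · rw [if_pos rfl, ← hQ, ((monic_ascPochhammer ℝ m).comp_X_add_C _).coeff_natDegree]
    field_simp
  · rw [if_neg hlt.ne, coeff_eq_zero_of_natDegree_lt (hQ.trans_lt hlt)]
    ring

theorem laguerreMoment_laguerre_mul (α : ℝ) {k : ℕ} {q : ℝ[X]} (hq : q.natDegree ≤ k) :
    laguerreMoment α (laguerre α k * q) =
      (-1) ^ k * (ascPochhammer ℝ k).eval (α + 1) * q.coeff k := by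
  conv_lhs => rw [q.as_sum_range_C_mul_X_pow' (Nat.lt_succ_of_le hq)]
  rw [mul_sum, map_sum, sum_congr rfl fun i hi => by
    rw [mul_left_comm, ← smul_eq_C_mul, map_smul, smul_eq_mul,
      laguerreMoment_laguerre_mul_X_pow α (mem_range_succ_iff.1 hi)]]
  simp [mul_comm]

noncomputable def laguerreSqNorm (α : ℝ) (k : ℕ) : ℝ := (ascPochhammer ℝ k).eval (α + 1) / k !

theorem laguerreMoment_laguerre_mul_laguerre (α : ℝ) (j k : ℕ) :
    laguerreMoment α (laguerre α j * laguerre α k) = if j = k then laguerreSqNorm α k else 0 := by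
  wlog hjk : j ≤ k generalizing j k
  · rw [mul_comm, this k j (le_of_not_ge hjk), if_neg (by omega), if_neg (by omega)]
  rw [mul_comm, laguerreMoment_laguerre_mul α ((natDegree_laguerre_le α j).trans hjk)]
  rcases hjk.eq_or_lt with rfl | hlt
  · rw [if_pos rfl, coeff_laguerre_self, laguerreSqNorm]
    field_simp
    rw [← pow_mul, pow_mul', neg_one_sq, one_pow, one_mul]
  · rw [if_neg hlt.ne, coeff_laguerre_of_lt α hlt, mul_zero]

theorem laguerreMoment_sum_mul_sum (α : ℝ) (s : Finset ℕ) (c e : ℕ → ℝ) :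
    laguerreMoment α ((∑ k ∈ s, c k • laguerre α k) * ∑ l ∈ s, e l • laguerre α l) =
      ∑ k ∈ s, c k * e k * laguerreSqNorm α k := by
  simp only [sum_mul_sum, smul_mul_smul, map_sum, map_smul, smul_eq_mul,
    laguerreMoment_laguerre_mul_laguerre, mul_ite, mul_zero, sum_ite_eq]
  exact sum_congr rfl fun k hk => by rw [if_pos hk, mul_assoc]

theorem pow_mul_rpow_mul_exp_neg {α x : ℝ} (hx : 0 < x) (m : ℕ) :
    x ^ m * (x ^ α * Real.exp (-x)) = Real.exp (-x) * x ^ (α + 1 + m - 1) := by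
  rw [show α + 1 + m - 1 = m + α by ring, Real.rpow_add hx, Real.rpow_natCast]
  ring

theorem integrableOn_pow_mul_rpow_mul_exp_neg {α : ℝ} (hα : -1 < α) (m : ℕ) :
    IntegrableOn (fun x : ℝ => x ^ m * (x ^ α * Real.exp (-x))) (Set.Ioi 0) :=
  (Real.GammaIntegral_convergent (add_pos_of_pos_of_nonneg (by linarith) m.cast_nonneg)
    ).congr_fun (fun _ hx => (pow_mul_rpow_mul_exp_neg hx m).symm) measurableSet_Ioi

theorem integral_pow_mul_rpow_mul_exp_neg {α : ℝ} (hα : -1 < α) (m : ℕ) :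
    ∫ x in Set.Ioi (0 : ℝ), x ^ m * (x ^ α * Real.exp (-x)) =
      Real.Gamma (α + 1) * (ascPochhammer ℝ m).eval (α + 1) := by
  rw [mul_comm, ← Real.Gamma_add_nat_eq_mul (by linarith), Real.Gamma_eq_integral
    (add_pos_of_pos_of_nonneg (by linarith) m.cast_nonneg)]
  exact setIntegral_congr_fun measurableSet_Ioi fun _ hx => pow_mul_rpow_mul_exp_neg hx m

theorem integral_eval_mul_rpow_mul_exp_neg {α : ℝ} (hα : -1 < α) (p : ℝ[X]) :
    ∫ x in Set.Ioi (0 : ℝ), p.eval x * (x ^ α * Real.exp (-x)) =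
      Real.Gamma (α + 1) * laguerreMoment α p := by
  simp only [eval_eq_sum, Polynomial.sum_def, sum_mul, mul_assoc]
  rw [integral_finsetSum _ fun m _ => (integrableOn_pow_mul_rpow_mul_exp_neg hα m).const_mul _]
  simp only [integral_const_mul, integral_pow_mul_rpow_mul_exp_neg hα,
    laguerreMoment, lsum_apply, Polynomial.sum_def, mul_sum, LinearMap.smul_apply,
    LinearMap.id_apply, smul_eq_mul]
  exact sum_congr rfl fun _ _ => by ring

theorem laguerreNorm_eval {α : ℝ} (hα : -1 < α) (p : ℝ[X]) :
    laguerreNorm α (fun x => p.eval x) = √(Real.Gamma (α + 1) * laguerreMoment α (p * p)) := by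
  simp only [laguerreNorm, ← integral_eval_mul_rpow_mul_exp_neg hα, eval_mul, sq]

theorem laguerreMoment_mul_self_nonneg {α : ℝ} (hα : -1 < α) (p : ℝ[X]) :
    0 ≤ laguerreMoment α (p * p) := by
  have hint : 0 ≤ ∫ x in Set.Ioi (0 : ℝ), (p * p).eval x * (x ^ α * Real.exp (-x)) :=
    setIntegral_nonneg measurableSet_Ioi fun x (hx : 0 < x) => by
      rw [eval_mul, ← sq]; positivity
  rwa [integral_eval_mul_rpow_mul_exp_neg hα, mul_nonneg_iff_of_pos_left
    (Real.Gamma_pos_of_pos (by linarith))] at hint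

theorem laguerreNorm_derivative_div_laguerreNorm {α : ℝ} (hα : -1 < α) (p : ℝ[X]) :
    laguerreNorm α (fun x => (derivative p).eval x) / laguerreNorm α (fun x => p.eval x) =
      √(laguerreMoment α (derivative p * derivative p) / laguerreMoment α (p * p)) := by
  have hΓ : 0 < Real.Gamma (α + 1) := Real.Gamma_pos_of_pos (by linarith)
  rw [laguerreNorm_eval hα, laguerreNorm_eval hα, ← Real.sqrt_div' _
    (mul_nonneg hΓ.le (laguerreMoment_mul_self_nonneg hα p)), mul_div_mul_left _ _ hΓ.ne']

theorem laguerreSqNorm_zero (α : ℝ) : laguerreSqNorm α 0 = 1 := by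
  simp [laguerreSqNorm]

theorem laguerreSqNorm_succ (α : ℝ) (k : ℕ) :
    laguerreSqNorm α (k + 1) = laguerreSqNorm α k * (α + 1 + k) / (k + 1) := by
  rw [laguerreSqNorm, laguerreSqNorm, ascPochhammer_succ_eval, factorial_succ]
  push_cast
  field_simp

theorem laguerreSqNorm_pos {α : ℝ} (hα : -1 < α) (k : ℕ) : 0 < laguerreSqNorm α k :=
  div_pos (ascPochhammer_pos k _ (by linarith)) (by positivity)

theorem sum_range_succ_laguerreSqNorm {α : ℝ} (hα : -1 < α) (n : ℕ) :
    ∑ i ∈ range (n + 1), laguerreSqNorm α i = laguerreSqNorm α n * (α + 1 + n) / (α + 1) := by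
  have hα1 : α + 1 ≠ 0 := by linarith
  induction n with
  | zero => simp [laguerreSqNorm_zero, hα1]
  | succ n ih =>
    rw [sum_range_succ, ih, laguerreSqNorm_succ]
    push_cast
    field_simp
    ring

noncomputable def laguerreTail (α : ℝ) (n m : ℕ) : ℝ :=
  ∑ k ∈ Ico (m + 1) (n + 1), (laguerreSqNorm α k)⁻¹

theorem laguerreTail_self (α : ℝ) (n : ℕ) : laguerreTail α n n = 0 := by
  simp [laguerreTail]

theorem laguerreTail_succ (α : ℝ) {n m : ℕ} (h : m ≤ n) :
    laguerreTail α (n + 1) m = laguerreTail α n m + (laguerreSqNorm α (n + 1))⁻¹ :=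
  sum_Ico_succ_top (by omega) _

theorem laguerreTail_pos {α : ℝ} (hα : -1 < α) {n m : ℕ} (h : m < n) : 0 < laguerreTail α n m :=
  sum_pos (fun k _ => inv_pos.2 (laguerreSqNorm_pos hα k)) (nonempty_Ico.2 (by omega))

theorem sum_laguerreSqNorm_mul_laguerreTail {α : ℝ} (hα : -1 < α) (n : ℕ) :
    ∑ i ∈ range n, laguerreSqNorm α i * laguerreTail α n i = n * (n + 1) / (2 * (α + 1)) := by
  have hα1 : α + 1 ≠ 0 := by linarith
  induction n with
  | zero => simp
  | succ n ih =>
    have hh := (laguerreSqNorm_pos hα n).ne'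
    have hn : α + 1 + n ≠ 0 := by linarith [n.cast_nonneg (α := ℝ)]
    rw [sum_congr rfl fun i hi => by rw [laguerreTail_succ α (mem_range_succ_iff.1 hi)]]
    simp only [mul_add, sum_add_distrib, ← sum_mul]
    rw [sum_range_succ, laguerreTail_self, mul_zero, add_zero, ih,
      sum_range_succ_laguerreSqNorm hα, laguerreSqNorm_succ]
    push_cast
    field_simp
    ring

theorem sum_sum_laguerreTail_max {α : ℝ} (hα : -1 < α) (n : ℕ) :
    ∑ i ∈ range n, ∑ j ∈ range n,
        laguerreSqNorm α i * laguerreSqNorm α j * laguerreTail α n (max i j) =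
      laguerreSqNorm α n *
          (n * (n + 1) * (2 * n + 1) + n * (n ^ 2 + 3 * n + 1) * α + n ^ 2 * α ^ 2) /
        ((α + 1) ^ 2 * (α + 2) * (α + 3)) := by
  have hα1 : α + 1 ≠ 0 := by linarith
  have hα2 : α + 2 ≠ 0 := by linarith
  have hα3 : α + 3 ≠ 0 := by linarith
  induction n with
  | zero => simp
  | succ n ih =>
    have hh := (laguerreSqNorm_pos hα n).ne'
    have hn : α + 1 + n ≠ 0 := by linarith [n.cast_nonneg (α := ℝ)]
    rw [sum_congr rfl fun i hi => sum_congr rfl fun j hj => by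
      rw [laguerreTail_succ α (max_le (mem_range_succ_iff.1 hi) (mem_range_succ_iff.1 hj))]]
    simp only [mul_add, sum_add_distrib]
    rw [sum_sum_mul_max_of_eq_zero (laguerreSqNorm α) (laguerreTail α n) (laguerreTail_self α n),
      ih]
    simp only [← sum_mul, ← mul_sum]
    rw [sum_range_succ_laguerreSqNorm hα, laguerreSqNorm_succ]
    push_cast
    field_simp
    ring

theorem sum_sum_laguerreTail_max_sq {α : ℝ} (hα : -1 < α) (n : ℕ) :
    ∑ i ∈ range n, ∑ j ∈ range n,
        laguerreSqNorm α i * laguerreSqNorm α j * laguerreTail α n (max i j) ^ 2 =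
      n * (n + 1) * (3 * n ^ 2 * (α + 2) + (2 * α ^ 2 + 5 * α + 6) * n + (α + 1) * (α + 6)) /
        (6 * (α + 1) ^ 2 * (α + 2) * (α + 3)) := by
  have hα1 : α + 1 ≠ 0 := by linarith
  have hα2 : α + 2 ≠ 0 := by linarith
  have hα3 : α + 3 ≠ 0 := by linarith
  induction n with
  | zero => simp
  | succ n ih =>
    have hh := (laguerreSqNorm_pos hα n).ne'
    have hn : α + 1 + n ≠ 0 := by linarith [n.cast_nonneg (α := ℝ)]
    set u := (laguerreSqNorm α (n + 1))⁻¹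
    rw [sum_congr rfl fun i hi => sum_congr rfl fun j hj => show
        laguerreSqNorm α i * laguerreSqNorm α j * laguerreTail α (n + 1) (max i j) ^ 2 =
          laguerreSqNorm α i * laguerreSqNorm α j * laguerreTail α n (max i j) ^ 2 +
          2 * u * (laguerreSqNorm α i * laguerreSqNorm α j * laguerreTail α n (max i j)) +
          u ^ 2 * (laguerreSqNorm α i * laguerreSqNorm α j) by
      rw [laguerreTail_succ α (max_le (mem_range_succ_iff.1 hi) (mem_range_succ_iff.1 hj))]
      ring]
    simp only [sum_add_distrib, ← mul_sum]
    rw [sum_sum_mul_max_of_eq_zero (laguerreSqNorm α) (fun m => laguerreTail α n m ^ 2)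
      (by simp [laguerreTail_self]), ih,
      sum_sum_mul_max_of_eq_zero (laguerreSqNorm α) (laguerreTail α n) (laguerreTail_self α n),
      sum_sum_laguerreTail_max hα, ← sum_mul, sum_range_succ_laguerreSqNorm hα]
    simp only [u, laguerreSqNorm_succ]
    push_cast
    field_simp
    ring

theorem laguerreMoment_derivative_mul_self_le {α : ℝ} (hα : -1 < α) {n : ℕ} {p : ℝ[X]}
    (hp : p.natDegree ≤ n) :
    laguerreMoment α (derivative p * derivative p) ≤
      n * (n + 1) / (2 * (α + 1)) * laguerreMoment α (p * p) := by
  obtain ⟨c, rfl⟩ := exists_eq_sum_smul_laguerre α hp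
  rw [derivative_sum_smul_laguerre, neg_mul_neg, laguerreMoment_sum_mul_sum,
    laguerreMoment_sum_mul_sum, ← sum_laguerreSqNorm_mul_laguerreTail hα n, sum_mul]
  refine sum_le_sum fun j hj => ?_
  have hcs : (∑ k ∈ Ico (j + 1) (n + 1), c k) ^ 2 / laguerreTail α n j ≤
      ∑ k ∈ range (n + 1), c k * c k * laguerreSqNorm α k := by
    refine (sq_sum_div_le_sum_sq_div _ _ fun k _ => inv_pos.2 (laguerreSqNorm_pos hα k)).trans ?_
    simp only [div_inv_eq_mul, sq]
    exact sum_le_sum_of_subset_of_nonneg (fun k hk => mem_range.2 (mem_Ico.1 hk).2)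
      fun k _ _ => mul_nonneg (mul_self_nonneg _) (laguerreSqNorm_pos hα k).le
  rw [div_le_iff₀ (laguerreTail_pos hα (mem_range.1 hj))] at hcs
  calc _ = laguerreSqNorm α j * (∑ k ∈ Ico (j + 1) (n + 1), c k) ^ 2 := by ring
    _ ≤ _ := mul_le_mul_of_nonneg_left hcs (laguerreSqNorm_pos hα j).le
    _ = _ := by ring

theorem laguerreMoment_div_le_markovConst_sq {α : ℝ} (hα : -1 < α) {n : ℕ} {p : ℝ[X]}
    (hp0 : p ≠ 0) (hp : p.natDegree ≤ n) :
    laguerreMoment α (derivative p * derivative p) / laguerreMoment α (p * p) ≤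
      markovConst n α ^ 2 := by
  have hbdd : BddAbove {r : ℝ | ∃ p : Polynomial ℝ, p ≠ 0 ∧ p.natDegree ≤ n ∧
      r = laguerreNorm α (fun x => (Polynomial.derivative p).eval x) /
        laguerreNorm α (fun x => p.eval x)} := by
    refine ⟨√(n * (n + 1) / (2 * (α + 1))), ?_⟩
    rintro _ ⟨q, -, hq, rfl⟩
    rw [laguerreNorm_derivative_div_laguerreNorm hα]
    refine Real.sqrt_le_sqrt ?_
    rcases (laguerreMoment_mul_self_nonneg hα q).eq_or_lt with h | h
    · rw [← h, div_zero]
      exact div_nonneg (by positivity) (by linarith)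
    · exact (div_le_iff₀ h).2 (laguerreMoment_derivative_mul_self_le hα hq)
  have h := le_csSup hbdd ⟨p, hp0, hp, rfl⟩
  rw [laguerreNorm_derivative_div_laguerreNorm hα] at h
  calc _ = √(laguerreMoment α (derivative p * derivative p) / laguerreMoment α (p * p)) ^ 2 :=
        (Real.sq_sqrt (div_nonneg (laguerreMoment_mul_self_nonneg hα _)
          (laguerreMoment_mul_self_nonneg hα _))).symm
    _ ≤ _ := pow_le_pow_left₀ (Real.sqrt_nonneg _) h 2

noncomputable def markovTestPoly (α : ℝ) (n i : ℕ) : ℝ[X] :=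
  ∑ k ∈ range (n + 1), (if i < k then (laguerreSqNorm α k)⁻¹ else 0) • laguerre α k

theorem natDegree_markovTestPoly_le (α : ℝ) (n i : ℕ) : (markovTestPoly α n i).natDegree ≤ n :=
  natDegree_sum_le_of_forall_le _ _ fun k hk =>
    (natDegree_smul_le _ _).trans ((natDegree_laguerre_le α k).trans (mem_range_succ_iff.1 hk))

theorem laguerreMoment_markovTestPoly_mul_self {α : ℝ} (hα : -1 < α) (n i : ℕ) :
    laguerreMoment α (markovTestPoly α n i * markovTestPoly α n i) = laguerreTail α n i := by
  have hterm : ∀ k, (if i < k then (laguerreSqNorm α k)⁻¹ else 0) *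
      (if i < k then (laguerreSqNorm α k)⁻¹ else 0) * laguerreSqNorm α k =
        if i < k then (laguerreSqNorm α k)⁻¹ else 0 := fun k => by
    split_ifs
    · field_simp [(laguerreSqNorm_pos hα k).ne']
    · simp
  rw [markovTestPoly, laguerreMoment_sum_mul_sum, laguerreTail]
  simp only [hterm, ← sum_filter]
  congr 1
  ext k
  simp only [mem_filter, mem_range, mem_Ico]
  omega

theorem laguerreMoment_derivative_markovTestPoly_mul_self (α : ℝ) (n i : ℕ) :
    laguerreMoment α (derivative (markovTestPoly α n i) * derivative (markovTestPoly α n i)) =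
      ∑ j ∈ range n, laguerreSqNorm α j * laguerreTail α n (max i j) ^ 2 := by
  rw [markovTestPoly, derivative_sum_smul_laguerre, neg_mul_neg, laguerreMoment_sum_mul_sum]
  refine sum_congr rfl fun j _ => ?_
  have hfilter : (Ico (j + 1) (n + 1)).filter (i < ·) = Ico (max i j + 1) (n + 1) := by
    ext k
    simp only [mem_filter, mem_Ico]
    omega
  rw [← sum_filter, hfilter, laguerreTail]
  ring

theorem markovTestPoly_ne_zero {α : ℝ} (hα : -1 < α) {n i : ℕ} (h : i < n) :
    markovTestPoly α n i ≠ 0 := fun h0 => (laguerreTail_pos hα h).ne' <| by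
  rw [← laguerreMoment_markovTestPoly_mul_self hα, h0, mul_zero, map_zero]

theorem sum_laguerreSqNorm_mul_sum_laguerreTail_max_sq {α : ℝ} (hα : -1 < α) (n : ℕ) :
    ∑ i ∈ range n, laguerreSqNorm α i *
        ∑ j ∈ range n, laguerreSqNorm α j * laguerreTail α n (max i j) ^ 2 =
      (n ^ 2 / ((α + 1) * (α + 3)) +
          (2 * α ^ 2 + 5 * α + 6) * n / (3 * (α + 1) * (α + 2) * (α + 3)) +
          (α + 6) / (3 * (α + 2) * (α + 3))) *
        ∑ i ∈ range n, laguerreSqNorm α i * laguerreTail α n i := by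
  have hα1 : α + 1 ≠ 0 := by linarith
  have hα2 : α + 2 ≠ 0 := by linarith
  have hα3 : α + 3 ≠ 0 := by linarith
  rw [sum_laguerreSqNorm_mul_laguerreTail hα]
  simp only [mul_sum, ← mul_assoc]
  rw [sum_sum_laguerreTail_max_sq hα]
  field_simp
  ring

theorem markov_dorfler_lower (α : ℝ) (hα : -1 < α) (n : ℕ) (hn : 3 ≤ n) :
    n ^ 2 / ((α + 1) * (α + 3)) + (2 * α ^ 2 + 5 * α + 6) * n / (3 * (α + 1) * (α + 2) * (α + 3)) +
        (α + 6) / (3 * (α + 2) * (α + 3)) ≤ (markovConst n α) ^ 2 := by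
  obtain ⟨i, hi, hB⟩ := exists_mul_le_of_mul_sum_le (nonempty_range_iff.2 (by omega))
    (fun i _ => laguerreSqNorm_pos hα i) (sum_laguerreSqNorm_mul_sum_laguerreTail_max_sq hα n).ge
  have hin := mem_range.1 hi
  calc _ ≤ (∑ j ∈ range n, laguerreSqNorm α j * laguerreTail α n (max i j) ^ 2) /
        laguerreTail α n i := (le_div_iff₀ (laguerreTail_pos hα hin)).2 hB
    _ = _ := by rw [← laguerreMoment_derivative_markovTestPoly_mul_self,
        ← laguerreMoment_markovTestPoly_mul_self hα]
    _ ≤ _ := laguerreMoment_div_le_markovConst_sq hα (markovTestPoly_ne_zero hα hin)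
        (natDegree_markovTestPoly_le α n i)
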